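/- arXiv:1203.4388 — 3 statements merged into one kernel-verified Lean document; each statement's English description precedes it below -/
import Mathlib

section
/- (Theorem 3) Suppose α is a geodesic on M, i.e., k_g(s) = 0 for all s ∈ I, and k_n(s) > 0 on I (so that T′ = k_n·N, N is the principal normal of α, and κ = k_n, τ = τ_g). Then there exist θ ∈ ℝ and a constant vector d with ⟨d,d⟩ = 1 and ⟨N(s),d⟩ = sinh θ for all s ∈ I (α is an isophote with spacelike axis) if and only if σ(s) = (k_n²/(k_n² + τ_g²)^{3/2})·(τ_g/k_n)′(s) is a constant function with |σ| < 1 (α is a slant helix with spacelike axis); in this case there is ε ∈ {−1,+1} with d = ε·(τ_g/√(k_n² + τ_g²))·cosh θ·T − ε·(k_n/√(k_n² + τ_g²))·cosh θ·B − sinh θ·N at every s ∈ I. -/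
/-- The Lorentzian (Minkowski) inner product on `E₁³ = ℝ³`:
`⟨x,y⟩ = -x₁y₁ + x₂y₂ + x₃y₃`. -/
noncomputable def mdot (x y : Fin 3 → ℝ) : ℝ :=
  -(x 0 * y 0) + x 1 * y 1 + x 2 * y 2

lemma hasDerivAt_mdot_right (d : Fin 3 → ℝ) {F : ℝ → Fin 3 → ℝ} {v : Fin 3 → ℝ} {s : ℝ}
    (h : HasDerivAt F v s) : HasDerivAt (fun t => mdot (F t) d) (mdot v d) s := by
  have h0 := hasDerivAt_pi.mp h 0
  have h1 := hasDerivAt_pi.mp h 1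
  have h2 := hasDerivAt_pi.mp h 2
  exact ((h0.mul_const (d 0)).neg.add (h1.mul_const (d 1))).add (h2.mul_const (d 2))

lemma const_of_deriv0 {f : ℝ → ℝ} {a b : ℝ}
    (h : ∀ s ∈ Set.Ioo a b, HasDerivAt f 0 s) {x y : ℝ}
    (hx : x ∈ Set.Ioo a b) (hy : y ∈ Set.Ioo a b) : f x = f y := by
  apply (convex_Ioo a b).is_const_of_fderivWithin_eq_zero
    (fun s hs => ((h s hs).differentiableAt).differentiableWithinAt) _ hx hy
  intro s hs
  rw [(((h s hs).hasFDerivAt.hasFDerivWithinAt)).fderivWithin (isOpen_Ioo.uniqueDiffWithinAt hs)]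
  ext
  simp

set_option maxHeartbeats 1600000 in
/-- **Theorem 3.** If `α` is a geodesic on `M` (`k_g ≡ 0`) with `k_n > 0` on `I`,
then `α` is an isophote curve with a spacelike axis if and only if `α` is a slant
helix with spacelike axis, i.e. `σ(s) = (k_n²/(k_n² + τ_g²)^{3/2})·(τ_g/k_n)′(s)` is
constant with `|σ| < 1`; and in this case the axis is, up to a global sign `ε`,
`d = ε·(τ_g/√(k_n²+τ_g²))·cosh θ·T − ε·(k_n/√(k_n²+τ_g²))·cosh θ·B − sinh θ·N`. -/
theorem statement17
    -- the open interval `I`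
    (a b : ℝ) (hab : a < b) (I : Set ℝ) (hI : I = Set.Ioo a b)
    -- the Darboux frame `T, B, N` of a unit-speed spacelike curve on a spacelike
    -- surface, with normal curvature `kn`, geodesic curvature `kg` and geodesic
    -- torsion `τg`
    (T B N : ℝ → Fin 3 → ℝ) (kn kg τg : ℝ → ℝ)
    (hTs : ContDiffOn ℝ (⊤ : ℕ∞) T I) (hBs : ContDiffOn ℝ (⊤ : ℕ∞) B I) (hNs : ContDiffOn ℝ (⊤ : ℕ∞) N I)
    (hkns : ContDiffOn ℝ (⊤ : ℕ∞) kn I) (hkgs : ContDiffOn ℝ (⊤ : ℕ∞) kg I)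
    (hτgs : ContDiffOn ℝ (⊤ : ℕ∞) τg I)
    (hTT : ∀ s ∈ I, mdot (T s) (T s) = 1)
    (hBB : ∀ s ∈ I, mdot (B s) (B s) = 1)
    (hNN : ∀ s ∈ I, mdot (N s) (N s) = -1)
    (hTB : ∀ s ∈ I, mdot (T s) (B s) = 0)
    (hTN : ∀ s ∈ I, mdot (T s) (N s) = 0)
    (hBN : ∀ s ∈ I, mdot (B s) (N s) = 0)
    -- the Darboux frame equations
    (hT' : ∀ s ∈ I, HasDerivAt T (kg s • B s + kn s • N s) s)
    (hB' : ∀ s ∈ I, HasDerivAt B ((-kg s) • T s + τg s • N s) s)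
    (hN' : ∀ s ∈ I, HasDerivAt N (kn s • T s + τg s • B s) s)
    -- `σ(s) = (k_n²/(k_n² + τ_g²)^{3/2})·(τ_g/k_n)′(s)`
    (σ : ℝ → ℝ)
    (hσ : ∀ s ∈ I, σ s =
      kn s ^ 2 / Real.sqrt ((kn s ^ 2 + τg s ^ 2) ^ 3) *
        deriv (fun u => τg u / kn u) s)
    -- `α` is a geodesic with positive normal curvature
    (hgeo : ∀ s ∈ I, kg s = 0) (hknpos : ∀ s ∈ I, 0 < kn s) :
    ((∃ θ : ℝ, ∃ d : Fin 3 → ℝ, mdot d d = 1 ∧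
        ∀ s ∈ I, mdot (N s) d = Real.sinh θ) ↔
      (∃ c : ℝ, |c| < 1 ∧ ∀ s ∈ I, σ s = c)) ∧
    (∀ θ : ℝ, ∀ d : Fin 3 → ℝ, mdot d d = 1 →
      (∀ s ∈ I, mdot (N s) d = Real.sinh θ) →
      ∃ ε : ℝ, (ε = 1 ∨ ε = -1) ∧ ∀ s ∈ I,
        d = (ε * (τg s / Real.sqrt (kn s ^ 2 + τg s ^ 2)) * Real.cosh θ) • T s
            - (ε * (kn s / Real.sqrt (kn s ^ 2 + τg s ^ 2)) * Real.cosh θ) • B s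
            - Real.sinh θ • N s) := by
  subst hI
  have hIo : IsOpen (Set.Ioo a b) := isOpen_Ioo
  set s₀ : ℝ := (a + b) / 2 with hs₀def
  have s₀mem : s₀ ∈ Set.Ioo a b := ⟨by rw [hs₀def]; linarith, by rw [hs₀def]; linarith⟩
  have hknd : ∀ s ∈ Set.Ioo a b, DifferentiableAt ℝ kn s := fun s hs =>
    (hkns.differentiableOn (by simp)).differentiableAt (hIo.mem_nhds hs)
  have hτgd : ∀ s ∈ Set.Ioo a b, DifferentiableAt ℝ τg s := fun s hs =>
    (hτgs.differentiableOn (by simp)).differentiableAt (hIo.mem_nhds hs)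
  have hWpos : ∀ s ∈ Set.Ioo a b, 0 < Real.sqrt (kn s ^ 2 + τg s ^ 2) := fun s hs =>
    Real.sqrt_pos.mpr (by nlinarith [hknpos s hs, sq_nonneg (τg s)])
  have hWsq : ∀ s ∈ Set.Ioo a b,
      Real.sqrt (kn s ^ 2 + τg s ^ 2) ^ 2 = kn s ^ 2 + τg s ^ 2 := fun s hs =>
    Real.sq_sqrt (by positivity)
  -- the basic relation `σ·W³ = τg′·kn − τg·kn′`
  have hσW : ∀ s ∈ Set.Ioo a b,
      σ s * Real.sqrt (kn s ^ 2 + τg s ^ 2) ^ 3 =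
        deriv τg s * kn s - τg s * deriv kn s := by
    intro s hs
    have hk := (hknpos s hs).ne'
    have hq : (0:ℝ) ≤ kn s ^ 2 + τg s ^ 2 := by positivity
    have hsr : Real.sqrt ((kn s ^ 2 + τg s ^ 2) ^ 3) =
        Real.sqrt (kn s ^ 2 + τg s ^ 2) ^ 3 := by
      rw [show (kn s ^ 2 + τg s ^ 2) ^ 3
          = (kn s ^ 2 + τg s ^ 2) ^ 2 * (kn s ^ 2 + τg s ^ 2) by ring,
        Real.sqrt_mul (by positivity), Real.sqrt_sq hq,
        show Real.sqrt (kn s ^ 2 + τg s ^ 2) ^ 3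
          = Real.sqrt (kn s ^ 2 + τg s ^ 2) ^ 2 * Real.sqrt (kn s ^ 2 + τg s ^ 2) by ring,
        Real.sq_sqrt hq]
    have hΔ : deriv (fun u => τg u / kn u) s
        = (deriv τg s * kn s - τg s * deriv kn s) / kn s ^ 2 :=
      deriv_div (hτgd s hs) (hknd s hs) hk
    have hW := (hWpos s hs).ne'
    rw [hσ s hs, hΔ, hsr]
    field_simp
  -- ===== main computation: every spacelike axis has the claimed form =====
  have main : ∀ θ : ℝ, ∀ d : Fin 3 → ℝ, mdot d d = 1 →
      (∀ s ∈ Set.Ioo a b, mdot (N s) d = Real.sinh θ) →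
      ∃ ε : ℝ, (ε = 1 ∨ ε = -1) ∧
        (∀ s ∈ Set.Ioo a b,
          d = (ε * (τg s / Real.sqrt (kn s ^ 2 + τg s ^ 2)) * Real.cosh θ) • T s
            - (ε * (kn s / Real.sqrt (kn s ^ 2 + τg s ^ 2)) * Real.cosh θ) • B s
            - Real.sinh θ • N s) ∧
        (∀ s ∈ Set.Ioo a b, σ s = ε * (Real.sinh θ / Real.cosh θ)) := by
    intro θ d hd hNd
    have chpos : 0 < Real.cosh θ := Real.cosh_pos θ
    -- derivatives of the frame coefficients of d
    have hx' : ∀ s ∈ Set.Ioo a b,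
        HasDerivAt (fun t => mdot (T t) d) (kn s * Real.sinh θ) s := by
      intro s hs
      have h := hasDerivAt_mdot_right d (hT' s hs)
      convert h using 1
      have hN := hNd s hs
      simp only [mdot, Pi.add_apply, Pi.smul_apply, smul_eq_mul] at hN ⊢
      rw [hgeo s hs]
      linear_combination (-(kn s)) * hN
    have hy' : ∀ s ∈ Set.Ioo a b,
        HasDerivAt (fun t => mdot (B t) d) (τg s * Real.sinh θ) s := by
      intro s hs
      have h := hasDerivAt_mdot_right d (hB' s hs)
      convert h using 1
      have hN := hNd s hs
      simp only [mdot, Pi.add_apply, Pi.smul_apply, smul_eq_mul] at hN ⊢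
      rw [hgeo s hs]
      linear_combination (-(τg s)) * hN
    -- orthogonality relation kn·x + τg·y = 0
    have hxy0 : ∀ s ∈ Set.Ioo a b,
        kn s * mdot (T s) d + τg s * mdot (B s) d = 0 := by
      intro s hs
      have hDN := hasDerivAt_mdot_right d (hN' s hs)
      have hconst : HasDerivAt (fun t => mdot (N t) d) 0 s := by
        have hev : (fun t => mdot (N t) d) =ᶠ[nhds s] fun _ => Real.sinh θ :=
          Filter.eventuallyEq_of_mem (hIo.mem_nhds hs) fun t ht => hNd t ht
        exact (hasDerivAt_const s (Real.sinh θ)).congr_of_eventuallyEq hev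
      have hu := hDN.unique hconst
      simp only [mdot, Pi.add_apply, Pi.smul_apply, smul_eq_mul] at hu ⊢
      linear_combination hu
    -- decomposition of d in the frame
    have hdecomp : ∀ s ∈ Set.Ioo a b, ∀ i : Fin 3,
        d i = mdot (T s) d * T s i + mdot (B s) d * B s i - Real.sinh θ * N s i := by
      intro s hs
      have h1 := hTT s hs; have h2 := hBB s hs; have h3 := hNN s hs
      have h4 := hTB s hs; have h5 := hTN s hs; have h6 := hBN s hs
      have hN := hNd s hs
      set X := mdot (T s) d with hXdef
      set Y := mdot (B s) d with hYdef
      have hXe : -(T s 0 * d 0) + T s 1 * d 1 + T s 2 * d 2 = X := by rw [hXdef]; rfl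
      have hYe : -(B s 0 * d 0) + B s 1 * d 1 + B s 2 * d 2 = Y := by rw [hYdef]; rfl
      have hNe : -(N s 0 * d 0) + N s 1 * d 1 + N s 2 * d 2 = Real.sinh θ := by
        rw [← hN]; rfl
      simp only [mdot] at h1 h2 h3 h4 h5 h6
      -- the determinant of the frame matrix
      set DD : ℝ := -(T s 0) * (B s 1 * N s 2 - B s 2 * N s 1)
          - T s 1 * (-(B s 0) * N s 2 - B s 2 * -(N s 0))
          + T s 2 * (-(B s 0) * N s 1 - B s 1 * -(N s 0)) with hDDdef
      have hdet : DD ^ 2 = 1 := by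
        have key : -DD ^ 2 =
            (-(T s 0 * T s 0) + T s 1 * T s 1 + T s 2 * T s 2) *
              (-(B s 0 * B s 0) + B s 1 * B s 1 + B s 2 * B s 2) *
              (-(N s 0 * N s 0) + N s 1 * N s 1 + N s 2 * N s 2)
            + 2 * (-(T s 0 * B s 0) + T s 1 * B s 1 + T s 2 * B s 2) *
              (-(T s 0 * N s 0) + T s 1 * N s 1 + T s 2 * N s 2) *
              (-(B s 0 * N s 0) + B s 1 * N s 1 + B s 2 * N s 2)
            - (-(T s 0 * T s 0) + T s 1 * T s 1 + T s 2 * T s 2) *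
              (-(B s 0 * N s 0) + B s 1 * N s 1 + B s 2 * N s 2) ^ 2
            - (-(B s 0 * B s 0) + B s 1 * B s 1 + B s 2 * B s 2) *
              (-(T s 0 * N s 0) + T s 1 * N s 1 + T s 2 * N s 2) ^ 2
            - (-(N s 0 * N s 0) + N s 1 * N s 1 + N s 2 * N s 2) *
              (-(T s 0 * B s 0) + T s 1 * B s 1 + T s 2 * B s 2) ^ 2 := by
          rw [hDDdef]; ring
        rw [h1, h2, h3, h4, h5, h6] at key
        norm_num at key
        rcases key with h | h <;> rw [h] <;> norm_num
      have hDD0 : DD ≠ 0 := by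
        intro h0; rw [h0] at hdet; norm_num at hdet
      -- the three orthogonality equations
      have hE1 : -(T s 0) * (d 0 - (X * T s 0 + Y * B s 0 - Real.sinh θ * N s 0))
          + T s 1 * (d 1 - (X * T s 1 + Y * B s 1 - Real.sinh θ * N s 1))
          + T s 2 * (d 2 - (X * T s 2 + Y * B s 2 - Real.sinh θ * N s 2)) = 0 := by
        linear_combination hXe - X * h1 - Y * h4 + Real.sinh θ * h5
      have hE2 : -(B s 0) * (d 0 - (X * T s 0 + Y * B s 0 - Real.sinh θ * N s 0))
          + B s 1 * (d 1 - (X * T s 1 + Y * B s 1 - Real.sinh θ * N s 1))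
          + B s 2 * (d 2 - (X * T s 2 + Y * B s 2 - Real.sinh θ * N s 2)) = 0 := by
        linear_combination hYe - X * h4 - Y * h2 + Real.sinh θ * h6
      have hE3 : -(N s 0) * (d 0 - (X * T s 0 + Y * B s 0 - Real.sinh θ * N s 0))
          + N s 1 * (d 1 - (X * T s 1 + Y * B s 1 - Real.sinh θ * N s 1))
          + N s 2 * (d 2 - (X * T s 2 + Y * B s 2 - Real.sinh θ * N s 2)) = 0 := by
        linear_combination hNe - X * h5 - Y * h6 + Real.sinh θ * h3
      -- Cramer elimination
      have he0 : d 0 = X * T s 0 + Y * B s 0 - Real.sinh θ * N s 0 := by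
        have h : (d 0 - (X * T s 0 + Y * B s 0 - Real.sinh θ * N s 0)) * DD = 0 := by
          linear_combination (B s 1 * N s 2 - B s 2 * N s 1) * hE1
            + (-(T s 1 * N s 2 - T s 2 * N s 1)) * hE2
            + (T s 1 * B s 2 - T s 2 * B s 1) * hE3
        rcases mul_eq_zero.mp h with h' | h'
        · linarith
        · exact absurd h' hDD0
      have he1 : d 1 = X * T s 1 + Y * B s 1 - Real.sinh θ * N s 1 := by
        have h : (d 1 - (X * T s 1 + Y * B s 1 - Real.sinh θ * N s 1)) * DD = 0 := by
          linear_combination (B s 0 * N s 2 - B s 2 * N s 0) * hE1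
            + (-(T s 0) * N s 2 + T s 2 * N s 0) * hE2
            + (T s 0 * B s 2 - T s 2 * B s 0) * hE3
        rcases mul_eq_zero.mp h with h' | h'
        · linarith
        · exact absurd h' hDD0
      have he2 : d 2 = X * T s 2 + Y * B s 2 - Real.sinh θ * N s 2 := by
        have h : (d 2 - (X * T s 2 + Y * B s 2 - Real.sinh θ * N s 2)) * DD = 0 := by
          linear_combination (-(B s 0) * N s 1 + B s 1 * N s 0) * hE1
            + (T s 0 * N s 1 - T s 1 * N s 0) * hE2
            + (-(T s 0) * B s 1 + T s 1 * B s 0) * hE3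
        rcases mul_eq_zero.mp h with h' | h'
        · linarith
        · exact absurd h' hDD0
      intro i
      fin_cases i
      exacts [he0, he1, he2]
    -- norm relation x² + y² = cosh²θ
    have hnorm : ∀ s ∈ Set.Ioo a b,
        mdot (T s) d ^ 2 + mdot (B s) d ^ 2 = Real.cosh θ ^ 2 := by
      intro s hs
      have h1 := hTT s hs; have h2 := hBB s hs; have h3 := hNN s hs
      have h4 := hTB s hs; have h5 := hTN s hs; have h6 := hBN s hs
      have hdc0 := hdecomp s hs 0
      have hdc1 := hdecomp s hs 1
      have hdc2 := hdecomp s hs 2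
      have hdd := hd
      set X := mdot (T s) d
      set Y := mdot (B s) d
      simp only [mdot] at h1 h2 h3 h4 h5 h6 hdd
      rw [hdc0, hdc1, hdc2] at hdd
      have hcs := Real.cosh_sq_sub_sinh_sq θ
      linear_combination hdd - X ^ 2 * h1 - Y ^ 2 * h2 - Real.sinh θ ^ 2 * h3
        - 2 * X * Y * h4 + 2 * X * Real.sinh θ * h5 + 2 * Y * Real.sinh θ * h6 - hcs
    -- the auxiliary sign function
    set u : ℝ → ℝ := fun s =>
      -(mdot (B s) d / kn s) * Real.sqrt (kn s ^ 2 + τg s ^ 2) with hudef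
    have husq : ∀ s ∈ Set.Ioo a b, u s ^ 2 = Real.cosh θ ^ 2 := by
      intro s hs
      have hk := (hknpos s hs).ne'
      have hW2 := hWsq s hs
      have hA := hxy0 s hs
      have hB2 := hnorm s hs
      rw [hudef]
      simp only
      rw [mul_pow, neg_pow, div_pow, hW2]
      field_simp
      linear_combination (τg s * mdot (B s) d - kn s * mdot (T s) d) * hA
        + kn s ^ 2 * hB2
    have hune : ∀ s ∈ Set.Ioo a b, u s ≠ 0 := by
      intro s hs h0
      have := husq s hs
      rw [h0] at this
      nlinarith [chpos]
    have hucont : ContinuousOn u (Set.Ioo a b) := by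
      have hBc := hBs.continuousOn
      have hb0 : ContinuousOn (fun s => B s 0) (Set.Ioo a b) :=
        (continuous_apply (0 : Fin 3)).comp_continuousOn hBc
      have hb1 : ContinuousOn (fun s => B s 1) (Set.Ioo a b) :=
        (continuous_apply (1 : Fin 3)).comp_continuousOn hBc
      have hb2 : ContinuousOn (fun s => B s 2) (Set.Ioo a b) :=
        (continuous_apply (2 : Fin 3)).comp_continuousOn hBc
      have hYc : ContinuousOn (fun s => mdot (B s) d) (Set.Ioo a b) := by
        simp only [mdot]
        exact ((hb0.mul continuousOn_const).neg.add (hb1.mul continuousOn_const)).add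
          (hb2.mul continuousOn_const)
      have hknc := hkns.continuousOn
      have hτgc := hτgs.continuousOn
      rw [hudef]
      exact ((hYc.div hknc fun s hs => (hknpos s hs).ne').neg).mul
        (Real.continuous_sqrt.comp_continuousOn ((hknc.pow 2).add (hτgc.pow 2)))
    have hcases : ∀ s ∈ Set.Ioo a b, u s = Real.cosh θ ∨ u s = -Real.cosh θ := by
      intro s hs
      have h2 := husq s hs
      have hfac : (u s - Real.cosh θ) * (u s + Real.cosh θ) = 0 := by linear_combination h2
      rcases mul_eq_zero.mp hfac with h | h
      · left; linarith
      · right; linarith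
    obtain ⟨ε, hεor, hεu⟩ : ∃ ε : ℝ, (ε = 1 ∨ ε = -1) ∧
        ∀ s ∈ Set.Ioo a b, u s = ε * Real.cosh θ := by
      rcases hcases s₀ s₀mem with h0 | h0
      · refine ⟨1, Or.inl rfl, fun s hs => ?_⟩
        rcases hcases s hs with h | h
        · rw [h]; ring
        · exfalso
          have hsub : Set.Icc (u s) (u s₀) ⊆ u '' Set.Ioo a b :=
            isPreconnected_Ioo.intermediate_value hs s₀mem hucont
          have h0m : (0 : ℝ) ∈ Set.Icc (u s) (u s₀) := by
            constructor
            · rw [h]; linarith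
            · rw [h0]; linarith
          obtain ⟨z, hz, hz0⟩ := hsub h0m
          exact hune z hz hz0
      · refine ⟨-1, Or.inr rfl, fun s hs => ?_⟩
        rcases hcases s hs with h | h
        · exfalso
          have hsub : Set.Icc (u s₀) (u s) ⊆ u '' Set.Ioo a b :=
            isPreconnected_Ioo.intermediate_value s₀mem hs hucont
          have h0m : (0 : ℝ) ∈ Set.Icc (u s₀) (u s) := by
            constructor
            · rw [h0]; linarith
            · rw [h]; linarith
          obtain ⟨z, hz, hz0⟩ := hsub h0m
          exact hune z hz hz0
        · rw [h]; ring
    have hε2 : ε ^ 2 = 1 := by rcases hεor with h | h <;> rw [h] <;> norm_num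
    -- the coefficients of d
    have hYW : ∀ s ∈ Set.Ioo a b,
        mdot (B s) d * Real.sqrt (kn s ^ 2 + τg s ^ 2) = -(ε * kn s * Real.cosh θ) := by
      intro s hs
      have hu := hεu s hs
      rw [hudef] at hu
      simp only at hu
      have hk := (hknpos s hs).ne'
      have hWne := (hWpos s hs).ne'
      field_simp at hu
      linear_combination -hu
    have hXW : ∀ s ∈ Set.Ioo a b,
        mdot (T s) d * Real.sqrt (kn s ^ 2 + τg s ^ 2) = ε * τg s * Real.cosh θ := by
      intro s hs
      have hA := hxy0 s hs
      have hk := (hknpos s hs).ne'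
      have hmul : kn s * (mdot (T s) d * Real.sqrt (kn s ^ 2 + τg s ^ 2)
          - ε * τg s * Real.cosh θ) = 0 := by
        linear_combination Real.sqrt (kn s ^ 2 + τg s ^ 2) * hA - τg s * hYW s hs
      have h2 := (mul_eq_zero.mp hmul).resolve_left hk
      linarith
    have hY : ∀ s ∈ Set.Ioo a b, mdot (B s) d
        = -(ε * (kn s / Real.sqrt (kn s ^ 2 + τg s ^ 2)) * Real.cosh θ) := by
      intro s hs
      have hWne := (hWpos s hs).ne'
      field_simp
      linear_combination hYW s hs
    have hX : ∀ s ∈ Set.Ioo a b, mdot (T s) d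
        = ε * (τg s / Real.sqrt (kn s ^ 2 + τg s ^ 2)) * Real.cosh θ := by
      intro s hs
      have hWne := (hWpos s hs).ne'
      field_simp
      linear_combination hXW s hs
    refine ⟨ε, hεor, ?_, ?_⟩
    · intro s hs
      funext i
      have hdc := hdecomp s hs i
      rw [hX s hs, hY s hs] at hdc
      simp only [Pi.sub_apply, Pi.smul_apply, smul_eq_mul]
      rw [hdc]; ring
    · intro s hs
      have hk := (hknpos s hs).ne'
      have hWne := (hWpos s hs).ne'
      have hW2 := hWsq s hs
      have hg : HasDerivAt (fun t => kn t * mdot (T t) d + τg t * mdot (B t) d)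
          (deriv kn s * mdot (T s) d + kn s * (kn s * Real.sinh θ)
            + (deriv τg s * mdot (B s) d + τg s * (τg s * Real.sinh θ))) s :=
        ((hknd s hs).hasDerivAt.mul (hx' s hs)).add
          ((hτgd s hs).hasDerivAt.mul (hy' s hs))
      have hconst : HasDerivAt (fun t => kn t * mdot (T t) d + τg t * mdot (B t) d) 0 s := by
        have hev : (fun t => kn t * mdot (T t) d + τg t * mdot (B t) d) =ᶠ[nhds s]
            fun _ => 0 :=
          Filter.eventuallyEq_of_mem (hIo.mem_nhds hs) fun t ht => hxy0 t ht
        exact (hasDerivAt_const s 0).congr_of_eventuallyEq hev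
      have hder := hg.unique hconst
      have hσs := hσW s hs
      have hgoal3 : σ s * Real.cosh θ * Real.sqrt (kn s ^ 2 + τg s ^ 2) ^ 3
          = ε * Real.sinh θ * Real.sqrt (kn s ^ 2 + τg s ^ 2) ^ 3 := by
        linear_combination Real.cosh θ * hσs
          - (ε * Real.sqrt (kn s ^ 2 + τg s ^ 2)) * hder
          + (ε * deriv kn s) * hXW s hs
          + (ε * deriv τg s) * hYW s hs
          - (ε * Real.sinh θ * Real.sqrt (kn s ^ 2 + τg s ^ 2)) * hW2
          - (Real.cosh θ * (deriv τg s * kn s - τg s * deriv kn s)) * hε2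
      have hfin : σ s * Real.cosh θ = ε * Real.sinh θ :=
        mul_right_cancel₀ (pow_ne_zero 3 hWne) hgoal3
      have hchne := ne_of_gt chpos
      field_simp
      linear_combination hfin
  constructor
  · constructor
    · rintro ⟨θ, d, hd, hNd⟩
      obtain ⟨ε, hε, _, hσc⟩ := main θ d hd hNd
      refine ⟨ε * (Real.sinh θ / Real.cosh θ), ?_, hσc⟩
      have habs : |Real.sinh θ| < Real.cosh θ := by
        nlinarith [Real.cosh_sq θ, Real.cosh_pos θ, abs_nonneg (Real.sinh θ),
          sq_abs (Real.sinh θ)]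
      have hεabs : |ε| = 1 := by rcases hε with h | h <;> rw [h] <;> norm_num
      rw [abs_mul, hεabs, one_mul, abs_div, abs_of_pos (Real.cosh_pos θ),
        div_lt_one (Real.cosh_pos θ)]
      exact habs
    · rintro ⟨c, hc, hcs⟩
      have h1c : 0 < 1 - c ^ 2 := by
        have h := abs_lt.mp hc
        nlinarith [h.1, h.2]
      set θ := Real.arsinh (c / Real.sqrt (1 - c ^ 2)) with hθdef
      have hsh : Real.sinh θ = c / Real.sqrt (1 - c ^ 2) := Real.sinh_arsinh _
      have hch : Real.cosh θ = 1 / Real.sqrt (1 - c ^ 2) := by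
        rw [hθdef, Real.cosh_arsinh, div_pow, Real.sq_sqrt h1c.le,
          show 1 + c ^ 2 / (1 - c ^ 2) = (1 - c ^ 2)⁻¹ by field_simp; ring,
          Real.sqrt_inv, one_div]
      have hkey : Real.cosh θ * c = Real.sinh θ := by rw [hsh, hch]; ring
      -- the candidate axis field is parallel
      have hderiv0 : ∀ i : Fin 3, ∀ s ∈ Set.Ioo a b,
          HasDerivAt (fun t =>
            Real.cosh θ * (τg t / Real.sqrt (kn t ^ 2 + τg t ^ 2)) * T t i
            - Real.cosh θ * (kn t / Real.sqrt (kn t ^ 2 + τg t ^ 2)) * B t i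
            - Real.sinh θ * N t i) 0 s := by
        intro i s hs
        have hk := (hknpos s hs).ne'
        have hWne := (hWpos s hs).ne'
        have hW2 := hWsq s hs
        have hσs := hσW s hs
        rw [hcs s hs] at hσs
        have hq : kn s ^ 2 + τg s ^ 2 ≠ 0 := by positivity
        have hin : HasDerivAt (fun t => kn t ^ 2 + τg t ^ 2)
            (2 * kn s * deriv kn s + 2 * τg s * deriv τg s) s := by
          have h := ((hknd s hs).hasDerivAt.pow 2).add ((hτgd s hs).hasDerivAt.pow 2)
          refine h.congr_deriv (Eq.symm ?_)
          push_cast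
          ring
        have hWd : HasDerivAt (fun t => Real.sqrt (kn t ^ 2 + τg t ^ 2))
            ((2 * kn s * deriv kn s + 2 * τg s * deriv τg s)
              / (2 * Real.sqrt (kn s ^ 2 + τg s ^ 2))) s := hin.sqrt hq
        have hGW : HasDerivAt (fun t => τg t / Real.sqrt (kn t ^ 2 + τg t ^ 2))
            (kn s * c) s := by
          have h := (hτgd s hs).hasDerivAt.div hWd hWne
          refine h.congr_deriv (Eq.symm ?_)
          have hval : (deriv τg s * Real.sqrt (kn s ^ 2 + τg s ^ 2) - τg s *
              ((2 * kn s * deriv kn s + 2 * τg s * deriv τg s)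
                / (2 * Real.sqrt (kn s ^ 2 + τg s ^ 2))))
              / Real.sqrt (kn s ^ 2 + τg s ^ 2) ^ 2
              = (deriv τg s * Real.sqrt (kn s ^ 2 + τg s ^ 2) ^ 2
                  - τg s * (kn s * deriv kn s + τg s * deriv τg s))
                / Real.sqrt (kn s ^ 2 + τg s ^ 2) ^ 3 := by
            field_simp
          rw [hval, eq_div_iff (pow_ne_zero 3 hWne)]
          linear_combination (kn s) * hσs - (deriv τg s) * hW2
        have hKW : HasDerivAt (fun t => kn t / Real.sqrt (kn t ^ 2 + τg t ^ 2))
            (-(τg s * c)) s := by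
          have h := (hknd s hs).hasDerivAt.div hWd hWne
          refine h.congr_deriv (Eq.symm ?_)
          have hval : (deriv kn s * Real.sqrt (kn s ^ 2 + τg s ^ 2) - kn s *
              ((2 * kn s * deriv kn s + 2 * τg s * deriv τg s)
                / (2 * Real.sqrt (kn s ^ 2 + τg s ^ 2))))
              / Real.sqrt (kn s ^ 2 + τg s ^ 2) ^ 2
              = (deriv kn s * Real.sqrt (kn s ^ 2 + τg s ^ 2) ^ 2
                  - kn s * (kn s * deriv kn s + τg s * deriv τg s))
                / Real.sqrt (kn s ^ 2 + τg s ^ 2) ^ 3 := by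
            field_simp
          rw [hval, eq_div_iff (pow_ne_zero 3 hWne)]
          linear_combination (-(τg s)) * hσs - (deriv kn s) * hW2
        have hTi := hasDerivAt_pi.mp (hT' s hs) i
        have hBi := hasDerivAt_pi.mp (hB' s hs) i
        have hNi := hasDerivAt_pi.mp (hN' s hs) i
        have h := (((hGW.const_mul (Real.cosh θ)).mul hTi).sub
          ((hKW.const_mul (Real.cosh θ)).mul hBi)).sub (hNi.const_mul (Real.sinh θ))
        refine h.congr_deriv (Eq.symm ?_)
        simp only [Pi.add_apply, Pi.smul_apply, smul_eq_mul, hgeo s hs]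
        linear_combination (-(kn s * T s i + τg s * B s i)) * hkey
      have hconstF : ∀ i : Fin 3, ∀ s ∈ Set.Ioo a b,
          Real.cosh θ * (τg s / Real.sqrt (kn s ^ 2 + τg s ^ 2)) * T s i
            - Real.cosh θ * (kn s / Real.sqrt (kn s ^ 2 + τg s ^ 2)) * B s i
            - Real.sinh θ * N s i
          = Real.cosh θ * (τg s₀ / Real.sqrt (kn s₀ ^ 2 + τg s₀ ^ 2)) * T s₀ i
            - Real.cosh θ * (kn s₀ / Real.sqrt (kn s₀ ^ 2 + τg s₀ ^ 2)) * B s₀ i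
            - Real.sinh θ * N s₀ i := fun i s hs =>
        const_of_deriv0 (hderiv0 i) hs s₀mem
      refine ⟨θ, fun i =>
        Real.cosh θ * (τg s₀ / Real.sqrt (kn s₀ ^ 2 + τg s₀ ^ 2)) * T s₀ i
          - Real.cosh θ * (kn s₀ / Real.sqrt (kn s₀ ^ 2 + τg s₀ ^ 2)) * B s₀ i
          - Real.sinh θ * N s₀ i, ?_, ?_⟩
      · have h1 := hTT s₀ s₀mem; have h2 := hBB s₀ s₀mem; have h3 := hNN s₀ s₀mem
        have h4 := hTB s₀ s₀mem; have h5 := hTN s₀ s₀mem; have h6 := hBN s₀ s₀mem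
        have hW2 := hWsq s₀ s₀mem
        have hWne := (hWpos s₀ s₀mem).ne'
        have hcs2 := Real.cosh_sq_sub_sinh_sq θ
        have hWinv : Real.sqrt (kn s₀ ^ 2 + τg s₀ ^ 2)
            * (Real.sqrt (kn s₀ ^ 2 + τg s₀ ^ 2))⁻¹ = 1 := mul_inv_cancel₀ hWne
        simp only [mdot] at h1 h2 h3 h4 h5 h6 ⊢
        linear_combination
          (Real.cosh θ * (τg s₀ / Real.sqrt (kn s₀ ^ 2 + τg s₀ ^ 2))) ^ 2 * h1
          + (Real.cosh θ * (kn s₀ / Real.sqrt (kn s₀ ^ 2 + τg s₀ ^ 2))) ^ 2 * h2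
          + Real.sinh θ ^ 2 * h3
          - 2 * (Real.cosh θ * (τg s₀ / Real.sqrt (kn s₀ ^ 2 + τg s₀ ^ 2)))
              * (Real.cosh θ * (kn s₀ / Real.sqrt (kn s₀ ^ 2 + τg s₀ ^ 2))) * h4
          - 2 * (Real.cosh θ * (τg s₀ / Real.sqrt (kn s₀ ^ 2 + τg s₀ ^ 2)))
              * Real.sinh θ * h5
          + 2 * (Real.cosh θ * (kn s₀ / Real.sqrt (kn s₀ ^ 2 + τg s₀ ^ 2)))
              * Real.sinh θ * h6
          - (Real.cosh θ ^ 2 * ((Real.sqrt (kn s₀ ^ 2 + τg s₀ ^ 2))⁻¹) ^ 2) * hW2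
          + (Real.cosh θ ^ 2 * (Real.sqrt (kn s₀ ^ 2 + τg s₀ ^ 2)
              * (Real.sqrt (kn s₀ ^ 2 + τg s₀ ^ 2))⁻¹ + 1)) * hWinv
          + hcs2
      · intro s hs
        have hds : ∀ i : Fin 3,
            Real.cosh θ * (τg s₀ / Real.sqrt (kn s₀ ^ 2 + τg s₀ ^ 2)) * T s₀ i
              - Real.cosh θ * (kn s₀ / Real.sqrt (kn s₀ ^ 2 + τg s₀ ^ 2)) * B s₀ i
              - Real.sinh θ * N s₀ i
            = Real.cosh θ * (τg s / Real.sqrt (kn s ^ 2 + τg s ^ 2)) * T s i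
              - Real.cosh θ * (kn s / Real.sqrt (kn s ^ 2 + τg s ^ 2)) * B s i
              - Real.sinh θ * N s i := fun i => (hconstF i s hs).symm
        have h3 := hNN s hs; have h5 := hTN s hs; have h6 := hBN s hs
        simp only [mdot] at h3 h5 h6 ⊢
        rw [hds 0, hds 1, hds 2]
        linear_combination (Real.cosh θ * (τg s / Real.sqrt (kn s ^ 2 + τg s ^ 2))) * h5
          - (Real.cosh θ * (kn s / Real.sqrt (kn s ^ 2 + τg s ^ 2))) * h6
          - Real.sinh θ * h3
  · intro θ d hd hNd
    obtain ⟨ε, hε, hform, _⟩ := main θ d hd hNd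
    exact ⟨ε, hε, hform⟩
end

section
/- (Proposition: isophote with spacelike axis which is a line of curvature is planar) Suppose in addition that α has Frenet curvature κ(s) > 0 and torsion τ, related to the Darboux invariants by a smooth function φ : I → ℝ via k_n = κ·cosh φ, k_g = κ·sinh φ, τ_g = τ + φ′. If α is an isophote with spacelike axis — i.e., ψ is constant on I with |ψ| < 1 — and α is a line of curvature, i.e., τ_g(s) = 0 for all s ∈ I, then τ(s) = 0 for all s ∈ I; that is, α is a plane curve. -/
/-- An isophote curve with spacelike axis which is also a line of curvature is a
plane curve: if the Darboux invariants come from a Frenet apparatus via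
`k_n = κ·cosh φ`, `k_g = κ·sinh φ`, `τ_g = τ + φ′` with `κ > 0`, if `ψ` is constant
on `I` with `|ψ| < 1`, and if `τ_g ≡ 0` on `I`, then `τ ≡ 0` on `I`. -/
theorem statement18
    -- the open interval `I`
    (a b : ℝ) (hab : a < b) (I : Set ℝ) (hI : I = Set.Ioo a b)
    -- the Darboux frame `T, B, N` of a unit-speed spacelike curve on a spacelike
    -- surface, with normal curvature `kn`, geodesic curvature `kg` and geodesic
    -- torsion `τg`
    (T B N : ℝ → Fin 3 → ℝ) (kn kg τg : ℝ → ℝ)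
    (hTs : ContDiffOn ℝ (⊤ : ℕ∞) T I) (hBs : ContDiffOn ℝ (⊤ : ℕ∞) B I) (hNs : ContDiffOn ℝ (⊤ : ℕ∞) N I)
    (hkns : ContDiffOn ℝ (⊤ : ℕ∞) kn I) (hkgs : ContDiffOn ℝ (⊤ : ℕ∞) kg I)
    (hτgs : ContDiffOn ℝ (⊤ : ℕ∞) τg I)
    (hTT : ∀ s ∈ I, mdot (T s) (T s) = 1)
    (hBB : ∀ s ∈ I, mdot (B s) (B s) = 1)
    (hNN : ∀ s ∈ I, mdot (N s) (N s) = -1)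
    (hTB : ∀ s ∈ I, mdot (T s) (B s) = 0)
    (hTN : ∀ s ∈ I, mdot (T s) (N s) = 0)
    (hBN : ∀ s ∈ I, mdot (B s) (N s) = 0)
    -- the Darboux frame equations
    (hT' : ∀ s ∈ I, HasDerivAt T (kg s • B s + kn s • N s) s)
    (hB' : ∀ s ∈ I, HasDerivAt B ((-kg s) • T s + τg s • N s) s)
    (hN' : ∀ s ∈ I, HasDerivAt N (kn s • T s + τg s • B s) s)
    -- `k_n` never vanishes on `I`
    (hkn0 : ∀ s ∈ I, kn s ≠ 0)
    -- `ψ(s) = (k_n²/(k_n² + τ_g²)^{3/2})·(τ_g/k_n)′(s) + k_g(s)/(k_n² + τ_g²)^{1/2}`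
    (ψ : ℝ → ℝ)
    (hψ : ∀ s ∈ I, ψ s =
      kn s ^ 2 / Real.sqrt ((kn s ^ 2 + τg s ^ 2) ^ 3) *
        deriv (fun u => τg u / kn u) s +
      kg s / Real.sqrt (kn s ^ 2 + τg s ^ 2))
    -- the Frenet curvature `κ`, torsion `τ` and the angle function `φ`
    (κ τ φ φ' : ℝ → ℝ)
    (hκs : ContDiffOn ℝ (⊤ : ℕ∞) κ I) (hτs : ContDiffOn ℝ (⊤ : ℕ∞) τ I) (hφs : ContDiffOn ℝ (⊤ : ℕ∞) φ I)
    (hκpos : ∀ s ∈ I, 0 < κ s)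
    (hφ' : ∀ s ∈ I, HasDerivAt φ (φ' s) s)
    (hknφ : ∀ s ∈ I, kn s = κ s * Real.cosh (φ s))
    (hkgφ : ∀ s ∈ I, kg s = κ s * Real.sinh (φ s))
    (hτgφ : ∀ s ∈ I, τg s = τ s + φ' s)
    -- `α` is an isophote with spacelike axis: `ψ` is constant with `|ψ| < 1`
    (c : ℝ) (hc : ∀ s ∈ I, ψ s = c) (hc1 : |c| < 1)
    -- `α` is a line of curvature
    (hloc : ∀ s ∈ I, τg s = 0) :
    ∀ s ∈ I, τ s = 0 := by
  intro s hs
  subst hI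
  have hIopen : IsOpen (Set.Ioo a b) := isOpen_Ioo
  -- On I, sinh (φ u) = c * cosh (φ u)
  have hsinh : ∀ u ∈ Set.Ioo a b, Real.sinh (φ u) - c * Real.cosh (φ u) = 0 := by
    intro u hu
    have hψu := hψ u hu
    have hτgu := hloc u hu
    have hderiv0 : deriv (fun v => τg v / kn v) u = 0 := by
      have hev : (fun v => τg v / kn v) =ᶠ[nhds u] fun _ => (0 : ℝ) := by
        filter_upwards [hIopen.mem_nhds hu] with v hv
        simp [hloc v hv]
      rw [hev.deriv_eq]
      simp
    have hknu := hknφ u hu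
    have hkgu := hkgφ u hu
    have hcoshpos : (0 : ℝ) < Real.cosh (φ u) := Real.cosh_pos (φ u)
    have hknpos : 0 < kn u := by
      rw [hknu]; exact mul_pos (hκpos u hu) hcoshpos
    have hsqrt : Real.sqrt (kn u ^ 2 + τg u ^ 2) = kn u := by
      rw [hτgu]
      simp [Real.sqrt_sq hknpos.le]
    have hceq := hc u hu
    rw [hψu, hderiv0, hsqrt, mul_zero, zero_add] at hceq
    -- hceq : kg u / kn u = c
    rw [hkgu, hknu] at hceq
    have hκne := (hκpos u hu).ne'
    field_simp at hceq
    nlinarith [hceq, hcoshpos, hκpos u hu]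
  -- hence φ' s = 0
  have hnhds : Set.Ioo a b ∈ nhds s := hIopen.mem_nhds hs
  have hev0 : (fun u => Real.sinh (φ u) - c * Real.cosh (φ u)) =ᶠ[nhds s] fun _ => (0 : ℝ) := by
    filter_upwards [hnhds] with v hv using hsinh v hv
  have hD : HasDerivAt (fun u => Real.sinh (φ u) - c * Real.cosh (φ u))
      (Real.cosh (φ s) * φ' s - c * (Real.sinh (φ s) * φ' s)) s :=
    ((hφ' s hs).sinh).sub (((hφ' s hs).cosh).const_mul c)
  have hD0 : HasDerivAt (fun u => Real.sinh (φ u) - c * Real.cosh (φ u)) 0 s :=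
    (hasDerivAt_const s (0 : ℝ)).congr_of_eventuallyEq hev0
  have heq := hD.unique hD0
  have hkey : (Real.cosh (φ s) - c * Real.sinh (φ s)) * φ' s = 0 := by ring_nf; linarith [heq]
  have hne : Real.cosh (φ s) - c * Real.sinh (φ s) ≠ 0 := by
    have h1 : |Real.sinh (φ s)| < Real.cosh (φ s) := by
      have := Real.cosh_sq (φ s)
      nlinarith [Real.cosh_pos (φ s), abs_nonneg (Real.sinh (φ s)),
        sq_abs (Real.sinh (φ s))]
    have h2 : |c * Real.sinh (φ s)| < Real.cosh (φ s) := by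
      rcases eq_or_ne (Real.sinh (φ s)) 0 with h | h
      · simp [h]; exact Real.cosh_pos (φ s)
      · calc |c * Real.sinh (φ s)| = |c| * |Real.sinh (φ s)| := abs_mul _ _
          _ < 1 * |Real.sinh (φ s)| := by
              exact mul_lt_mul_of_pos_right hc1 (abs_pos.mpr h)
          _ = |Real.sinh (φ s)| := one_mul _
          _ < Real.cosh (φ s) := h1
    have := abs_lt.mp h2
    intro hcontra
    linarith [this.2]
  have hφ'0 : φ' s = 0 := by
    rcases mul_eq_zero.mp hkey with h | h
    · exact absurd h hne
    · exact h
  have := hτgφ s hs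
  rw [hloc s hs, hφ'0, add_zero] at this
  linarith [this]
end

section
/- (Theorem, part 1) Let θ ∈ ℝ and let d be a constant vector with ⟨d,d⟩ = 1 and ⟨N(s),d⟩ = sinh θ for all s ∈ I (α is an isophote with spacelike axis d). Then for every s ∈ I, ⟨T(s),d⟩ = 0 if and only if τ_g(s) = 0; in particular, the axis d is orthogonal to the tangent line of α along the whole curve if and only if α is a line of curvature (τ_g ≡ 0 on I). -/
lemma mdot_nondeg (u v w x : Fin 3 → ℝ)
    (huu : mdot u u = 1) (hvv : mdot v v = 1) (hww : mdot w w = -1)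
    (huv : mdot u v = 0) (huw : mdot u w = 0) (hvw : mdot v w = 0)
    (hxu : mdot u x = 0) (hxv : mdot v x = 0) (hxw : mdot w x = 0) : x = 0 := by
  simp only [mdot] at huu hvv hww huv huw hvw hxu hxv hxw
  set A : Matrix (Fin 3) (Fin 3) ℝ :=
    !![-(u 0), u 1, u 2; -(v 0), v 1, v 2; -(w 0), w 1, w 2] with hA
  set Mt : Matrix (Fin 3) (Fin 3) ℝ :=
    !![u 0, v 0, w 0; u 1, v 1, w 1; u 2, v 2, w 2] with hMt
  have hG : A * Mt = !![(1:ℝ),0,0;0,1,0;0,0,-1] := by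
    ext i j
    fin_cases i <;> fin_cases j <;>
      simp [hA, hMt, Matrix.mul_apply, Fin.sum_univ_three, Matrix.vecHead,
        Matrix.vecTail] <;> linarith
  have hdet : A.det * Mt.det = -1 := by
    have h1 := congrArg Matrix.det hG
    rw [Matrix.det_mul] at h1
    have h2 : (!![(1:ℝ),0,0;0,1,0;0,0,-1]).det = -1 := by
      simp [Matrix.det_fin_three]
    rw [h2] at h1; exact h1
  have hdA : IsUnit A.det := isUnit_iff_ne_zero.mpr (by
    intro h; rw [h, zero_mul] at hdet; norm_num at hdet)
  have hAx : A.mulVec x = 0 := by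
    ext i
    fin_cases i <;>
      simp [hA, Matrix.mulVec, dotProduct, Fin.sum_univ_three] <;> linarith
  have hx : x = (A⁻¹ * A).mulVec x := by rw [Matrix.nonsing_inv_mul A hdA]; simp
  rw [← Matrix.mulVec_mulVec, hAx] at hx
  simpa using hx

lemma mdot_expand (y z p q r : Fin 3 → ℝ) (aa bb cc : ℝ) :
    mdot y (fun i => z i - aa * p i - bb * q i + cc * r i)
      = mdot y z - aa * mdot y p - bb * mdot y q + cc * mdot y r := by
  simp only [mdot]; ring

lemma mdot_comm (x y : Fin 3 → ℝ) : mdot x y = mdot y x := by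
  simp only [mdot]; ring

/-- **Theorem, part 1.** If `α` is an isophote curve with spacelike axis `d`
(a constant vector with `⟨d,d⟩ = 1` and `⟨N,d⟩ = sinh θ` along the curve), then for
every `s ∈ I`, `⟨T(s),d⟩ = 0` if and only if `τ_g(s) = 0`; in particular the axis
`d` is orthogonal to the tangent line of `α` along the whole curve if and only if
`α` is a line of curvature. -/
theorem statement19
    -- the open interval `I`
    (a b : ℝ) (hab : a < b) (I : Set ℝ) (hI : I = Set.Ioo a b)
    -- the Darboux frame `T, B, N` of a unit-speed spacelike curve on a spacelike
    -- surface, with normal curvature `kn`, geodesic curvature `kg` and geodesic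
    -- torsion `τg`
    (T B N : ℝ → Fin 3 → ℝ) (kn kg τg : ℝ → ℝ)
    (hTs : ContDiffOn ℝ (⊤ : ℕ∞) T I) (hBs : ContDiffOn ℝ (⊤ : ℕ∞) B I) (hNs : ContDiffOn ℝ (⊤ : ℕ∞) N I)
    (hkns : ContDiffOn ℝ (⊤ : ℕ∞) kn I) (hkgs : ContDiffOn ℝ (⊤ : ℕ∞) kg I)
    (hτgs : ContDiffOn ℝ (⊤ : ℕ∞) τg I)
    (hTT : ∀ s ∈ I, mdot (T s) (T s) = 1)
    (hBB : ∀ s ∈ I, mdot (B s) (B s) = 1)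
    (hNN : ∀ s ∈ I, mdot (N s) (N s) = -1)
    (hTB : ∀ s ∈ I, mdot (T s) (B s) = 0)
    (hTN : ∀ s ∈ I, mdot (T s) (N s) = 0)
    (hBN : ∀ s ∈ I, mdot (B s) (N s) = 0)
    -- the Darboux frame equations
    (hT' : ∀ s ∈ I, HasDerivAt T (kg s • B s + kn s • N s) s)
    (hB' : ∀ s ∈ I, HasDerivAt B ((-kg s) • T s + τg s • N s) s)
    (hN' : ∀ s ∈ I, HasDerivAt N (kn s • T s + τg s • B s) s)
    -- `k_n` never vanishes on `I`
    (hkn0 : ∀ s ∈ I, kn s ≠ 0)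
    -- `d` is a constant spacelike unit vector with `⟨N,d⟩ = sinh θ` along the curve
    (θ : ℝ) (d : Fin 3 → ℝ) (hdd : mdot d d = 1)
    (hNd : ∀ s ∈ I, mdot (N s) d = Real.sinh θ)
    :
    (∀ s ∈ I, (mdot (T s) d = 0 ↔ τg s = 0)) ∧
    ((∀ s ∈ I, mdot (T s) d = 0) ↔ (∀ s ∈ I, τg s = 0)) := by
  have hIopen : IsOpen I := hI ▸ isOpen_Ioo
  have main : ∀ s ∈ I, (mdot (T s) d = 0 ↔ τg s = 0) := by
    intro s hs
    set f : ℝ := mdot (T s) d with hf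
    set g : ℝ := mdot (B s) d with hg
    set h : ℝ := Real.sinh θ with hh
    -- derivative of ⟨N, d⟩
    have hNi : ∀ i, HasDerivAt (fun t => N t i) ((kn s • T s + τg s • B s) i) s :=
      hasDerivAt_pi.mp (hN' s hs)
    have hsum : HasDerivAt (fun t => -(N t 0 * d 0) + N t 1 * d 1 + N t 2 * d 2)
        (-((kn s • T s + τg s • B s) 0 * d 0) + (kn s • T s + τg s • B s) 1 * d 1
          + (kn s • T s + τg s • B s) 2 * d 2) s :=
      ((((hNi 0).mul_const (d 0)).neg).add ((hNi 1).mul_const (d 1))).add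
        ((hNi 2).mul_const (d 2))
    have hconst : HasDerivAt (fun t => -(N t 0 * d 0) + N t 1 * d 1 + N t 2 * d 2)
        0 s := by
      refine (hasDerivAt_const s (Real.sinh θ)).congr_of_eventuallyEq ?_
      filter_upwards [hIopen.mem_nhds hs] with t ht
      exact hNd t ht
    have key : kn s * f + τg s * g = 0 := by
      have hk := hsum.unique hconst
      simp only [Pi.add_apply, Pi.smul_apply, smul_eq_mul] at hk
      simp only [hf, hg, mdot]
      linarith [hk]
    -- decompose d in the frame
    have hT1 := hTT s hs; have hB1 := hBB s hs; have hN1 := hNN s hs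
    have hTB1 := hTB s hs; have hTN1 := hTN s hs; have hBN1 := hBN s hs
    have hNd1 := hNd s hs
    have hTe : mdot (T s) (fun i => d i - f * T s i - g * B s i + h * N s i) = 0 := by
      rw [mdot_expand, hT1, hTB1, hTN1]; ring
    have hBe : mdot (B s) (fun i => d i - f * T s i - g * B s i + h * N s i) = 0 := by
      rw [mdot_expand, hB1, mdot_comm (B s) (T s), hTB1, hBN1,
        show mdot (B s) d = g from rfl]; ring
    have hNe : mdot (N s) (fun i => d i - f * T s i - g * B s i + h * N s i) = 0 := by
      rw [mdot_expand, hN1, mdot_comm (N s) (T s), hTN1, mdot_comm (N s) (B s), hBN1,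
        hNd1]; ring
    have he := mdot_nondeg (T s) (B s) (N s) _ hT1 hB1 hN1 hTB1 hTN1 hBN1 hTe hBe hNe
    have hd : ∀ i, d i = f * T s i + g * B s i - h * N s i := by
      intro i
      have := congrFun he i
      simp only [Pi.zero_apply] at this
      linarith [this]
    have hid : f * f + g * g - h * h = 1 := by
      have hdd' := hdd
      simp only [mdot] at hdd' hT1 hB1 hN1 hTB1 hTN1 hBN1
      rw [hd 0, hd 1, hd 2] at hdd'
      linear_combination hdd' - f*f*hT1 - g*g*hB1 - h*h*hN1 - 2*f*g*hTB1
        + 2*f*h*hTN1 + 2*g*h*hBN1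
    constructor
    · intro hf0
      have hg2 : g * g = 1 + h * h := by rw [hf0] at hid; linarith
      have hgne : g ≠ 0 := by
        intro h0
        rw [h0] at hg2
        nlinarith [sq_nonneg h]
      have : τg s * g = 0 := by rw [hf0] at key; linarith
      rcases mul_eq_zero.mp this with h1 | h1
      · exact h1
      · exact absurd h1 hgne
    · intro ht0
      have : kn s * f = 0 := by rw [ht0] at key; linarith
      rcases mul_eq_zero.mp this with h1 | h1
      · exact absurd h1 (hkn0 s hs)
      · exact h1
  exact ⟨main, ⟨fun H s hs => (main s hs).mp (H s hs),
    fun H s hs => (main s hs).mpr (H s hs)⟩⟩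
end
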